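/- For α ∈ ℂ with |α| ≤ 1 and k ≥ 1, the composition operator C_φ with φ(z) = α z^k is an isometry on H²_h(D) if and only if |α| = 1. -/

import Mathlib

noncomputable section
open Complex Metric Filter Set MeasureTheory
open scoped Real ComplexConjugate ComplexInnerProductSpace

/-- The underlying `ℓ²` space of square-summable complex sequences. -/
abbrev ℓ2 : Type := lp (fun _ : ℕ => ℂ) 2

/-- The Hilbert space `H²ₕ(𝔻)` of complex-valued harmonic functions on the unit disc,
represented by the pair of coefficient sequences `(aₙ)ₙ` and `(conj bₙ)ₙ`,
with the `L²` product norm. -/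
abbrev Hh : Type := WithLp 2 (ℓ2 × ℓ2)

/-- The analytic-part Taylor coefficients `aₙ` of `f = h + conj g`. -/
def aCoef (f : Hh) : ℕ → ℂ := fun n => (WithLp.equiv 2 (ℓ2 × ℓ2) f).1 n

/-- The co-analytic-part Taylor coefficients `bₙ` of `f = h + conj g`. -/
def bCoef (f : Hh) : ℕ → ℂ := fun n => conj ((WithLp.equiv 2 (ℓ2 × ℓ2) f).2 n)

/-- The harmonic function on the disc determined by an element of `H²ₕ(𝔻)`:
`f(z) = Σ aₙ zⁿ + conj (Σ bₙ zⁿ)`. -/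
def toFun (f : Hh) (z : ℂ) : ℂ :=
  (∑' n : ℕ, aCoef f n * z ^ n) + conj (∑' n : ℕ, bCoef f n * z ^ n)

lemma memℓ2_pow {α : ℂ} (h : ‖α‖ < 1) : Memℓp (fun n : ℕ => α ^ n) 2 := by
  apply memℓp_gen
  have h2 : Summable (fun n : ℕ => (‖α‖ ^ 2) ^ n) :=
    summable_geometric_of_lt_one (by positivity) (by nlinarith [norm_nonneg α])
  refine h2.congr fun n => ?_
  rw [show ((2 : ENNReal)).toReal = ((2 : ℕ) : ℝ) by norm_num, Real.rpow_natCast, norm_pow,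
    ← pow_mul, ← pow_mul, Nat.mul_comm]

/-- The reproducing kernel `K_α(z) = 1/(1 - conj α · z) + 1/(1 - α · conj z)` of `H²ₕ(𝔻)`,
as an element of `Hh` (junk value `0` when `α` is outside the unit disc). -/
def kernel (α : ℂ) : Hh :=
  if h : ‖α‖ < 1 then
    (WithLp.equiv 2 (ℓ2 × ℓ2)).symm
      (⟨fun n => (conj α) ^ n, memℓ2_pow (by simpa using h)⟩,
       ⟨fun n => α ^ n, memℓ2_pow h⟩)
  else 0

/-- `F = C_φ f`, i.e. `F` is obtained from `f = h + conj g` by composing each part with `φ`: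
on the unit disc, the analytic part of `F` is `h ∘ φ` and the co-analytic part is `conj (g ∘ φ)`. -/
def Represents (φ : ℂ → ℂ) (f F : Hh) : Prop :=
  ∀ z ∈ ball (0 : ℂ) 1,
    ((∑' n : ℕ, aCoef F n * z ^ n) = ∑' n : ℕ, aCoef f n * (φ z) ^ n) ∧
    ((∑' n : ℕ, bCoef F n * z ^ n) = ∑' n : ℕ, bCoef f n * (φ z) ^ n)

/-- The Poisson kernel `P_r(x)` for the unit disc. -/
def poisson (r x : ℝ) : ℝ := (1 - r ^ 2) / (1 - 2 * r * Real.cos x + r ^ 2)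

/-- A real-valued function is harmonic on a set: it is `C²` there and its Laplacian vanishes. -/
def HarmonicOnDisc (u : ℂ → ℝ) (s : Set ℂ) : Prop :=
  ContDiffOn ℝ 2 u s ∧
    ∀ z ∈ s, iteratedFDeriv ℝ 2 u z ![1, 1] + iteratedFDeriv ℝ 2 u z ![Complex.I, Complex.I] = 0

/-!
Composing `f = ∑ aₙ zⁿ + conj (∑ bₙ zⁿ)` with `φ(z) = α zᵏ` multiplies `aₙ` and `bₙ` by `αⁿ` and
moves them to index `k n`; by uniqueness of power series coefficients on the disc this is the only
possible `C_φ f`. Hence `‖C_φ f‖² = ∑ |α|²ⁿ (|aₙ|² + |bₙ|²)`, which is `‖f‖²` when `|α| = 1`, while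
`f(z) = z` gives `‖C_φ f‖ = |α|`.
-/

section LTwo

variable {ι : Type*} {E : ι → Type*} [∀ i, NormedAddCommGroup (E i)]

theorem memℓp_two_iff {f : ∀ i, E i} : Memℓp f 2 ↔ Summable fun i => ‖f i‖ ^ 2 := by
  rw [memℓp_gen_iff (by norm_num)]
  norm_num

theorem lp.norm_sq_eq_tsum (f : lp E 2) : ‖f‖ ^ 2 = ∑' i, ‖f i‖ ^ 2 := by
  simpa using lp.norm_rpow_eq_tsum (p := 2) (by norm_num) f

end LTwo

theorem hasFPowerSeriesOnBall_tsum_mul_pow {c : ℕ → ℂ} {C : ℝ} (hC : ∀ n, ‖c n‖ ≤ C) :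
    HasFPowerSeriesOnBall (fun z => ∑' n, c n * z ^ n)
      (FormalMultilinearSeries.ofScalars ℂ c) 0 1 := by
  refine ⟨?_, one_pos, fun {y} hy => ?_⟩
  · exact FormalMultilinearSeries.le_radius_of_bound _ C (r := 1) fun n => by simpa using hC n
  · have hy1 : ‖y‖ < 1 := by simpa [mem_eball, ← ofReal_norm, ENNReal.ofReal_lt_one] using hy
    have hsum : Summable fun n => c n * y ^ n :=
      .of_norm_bounded ((summable_geometric_of_lt_one (norm_nonneg y) hy1).mul_left C) fun n => by
        rw [norm_mul, norm_pow]
        exact mul_le_mul_of_nonneg_right (hC n) (by positivity)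
    simpa [FormalMultilinearSeries.ofScalars_apply_eq, mul_comm] using hsum.hasSum

theorem eq_of_tsum_mul_pow_eq {c d : ℕ → ℂ} (hc : Memℓp c ⊤) (hd : Memℓp d ⊤)
    (h : ∀ z ∈ ball (0 : ℂ) 1, ∑' n, c n * z ^ n = ∑' n, d n * z ^ n) : c = d := by
  obtain ⟨C, hC⟩ := memℓp_infty_iff.1 hc
  obtain ⟨D, hD⟩ := memℓp_infty_iff.1 hd
  have hc' := (hasFPowerSeriesOnBall_tsum_mul_pow fun n => hC ⟨n, rfl⟩).hasFPowerSeriesAt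
  have hd' := (hasFPowerSeriesOnBall_tsum_mul_pow fun n => hD ⟨n, rfl⟩).hasFPowerSeriesAt
  exact FormalMultilinearSeries.ofScalars_series_injective ℂ ℂ <|
    hc'.eq_formalMultilinearSeries_of_eventually hd' (eventually_of_mem (ball_mem_nhds _ one_pos) h)

/-- The coefficients of `∑ xₙ (β zᵏ)ⁿ` as a power series in `z`. -/
def compMonomialCoeff (k : ℕ) (β : ℂ) (x : ℕ → ℂ) (m : ℕ) : ℂ :=
  if k ∣ m then x (m / k) * β ^ (m / k) else 0

section compMonomialCoeff

variable {k : ℕ} {β : ℂ} {x : ℕ → ℂ}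

theorem compMonomialCoeff_mul_left (hk : k ≠ 0) (n : ℕ) :
    compMonomialCoeff k β x (k * n) = x n * β ^ n := by
  simp [compMonomialCoeff, Nat.mul_div_cancel_left n (Nat.pos_of_ne_zero hk)]

theorem compMonomialCoeff_of_not_dvd {m : ℕ} (hm : ¬ k ∣ m) : compMonomialCoeff k β x m = 0 :=
  if_neg hm

theorem support_compMonomialCoeff_subset :
    Function.support (compMonomialCoeff k β x) ⊆ Set.range (k * ·) := fun _ hm =>
  (not_not.1 (mt compMonomialCoeff_of_not_dvd hm)).imp fun _ hn => hn.symm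

theorem tsum_compMonomialCoeff_mul_pow (hk : k ≠ 0) (z : ℂ) :
    ∑' m, compMonomialCoeff k β x m * z ^ m = ∑' n, x n * (β * z ^ k) ^ n := by
  rw [← (mul_right_injective₀ hk).tsum_eq fun m hm =>
    support_compMonomialCoeff_subset (Function.support_mul_subset_left _ _ hm)]
  refine tsum_congr fun n => ?_
  rw [compMonomialCoeff_mul_left hk, mul_pow, pow_mul, mul_assoc]

theorem norm_sq_compMonomialCoeff_mul_left (hk : k ≠ 0) (n : ℕ) :
    ‖compMonomialCoeff k β x (k * n)‖ ^ 2 = ‖x n‖ ^ 2 * (‖β‖ ^ 2) ^ n := by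
  rw [compMonomialCoeff_mul_left hk, norm_mul, norm_pow, mul_pow, ← pow_mul, ← pow_mul, mul_comm n]

theorem tsum_norm_sq_compMonomialCoeff (hk : k ≠ 0) :
    ∑' m, ‖compMonomialCoeff k β x m‖ ^ 2 = ∑' n, ‖x n‖ ^ 2 * (‖β‖ ^ 2) ^ n := by
  rw [← (mul_right_injective₀ hk).tsum_eq fun m hm => support_compMonomialCoeff_subset (by
    simpa using hm)]
  exact tsum_congr (norm_sq_compMonomialCoeff_mul_left hk)

theorem memℓp_compMonomialCoeff (hk : k ≠ 0) (hβ : ‖β‖ ≤ 1) (hx : Memℓp x 2) :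
    Memℓp (compMonomialCoeff k β x) 2 := by
  rw [memℓp_two_iff] at hx ⊢
  rw [← (mul_right_injective₀ hk).summable_iff fun m hm => by
    rw [compMonomialCoeff_of_not_dvd fun ⟨n, hn⟩ => hm ⟨n, hn.symm⟩, norm_zero, sq, zero_mul]]
  refine .of_nonneg_of_le (fun _ => sq_nonneg _) (fun n => ?_) hx
  rw [Function.comp_apply, norm_sq_compMonomialCoeff_mul_left hk]
  exact mul_le_of_le_one_right (sq_nonneg _)
    (pow_le_one₀ (sq_nonneg _) (pow_le_one₀ (norm_nonneg β) hβ))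

end compMonomialCoeff

theorem forall_tsum_mul_pow_eq_comp_monomial_iff {α : ℂ} {k : ℕ} (hk : k ≠ 0) (hα : ‖α‖ ≤ 1)
    {c x : ℕ → ℂ} (hc : Memℓp c 2) (hx : Memℓp x 2) :
    (∀ z ∈ ball (0 : ℂ) 1, ∑' m, c m * z ^ m = ∑' n, x n * (α * z ^ k) ^ n) ↔
      c = compMonomialCoeff k α x := by
  simp only [← tsum_compMonomialCoeff_mul_pow hk]
  refine ⟨eq_of_tsum_mul_pow_eq (hc.of_exponent_ge le_top) ?_, fun h _ _ => by rw [h]⟩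
  exact (memℓp_compMonomialCoeff hk hα hx).of_exponent_ge le_top

theorem aCoef_eq_fst (f : Hh) : aCoef f = ⇑f.fst := rfl

theorem bCoef_eq_star_snd (f : Hh) : bCoef f = star (⇑f.snd : ℕ → ℂ) := rfl

theorem memℓp_aCoef (f : Hh) : Memℓp (aCoef f) 2 := f.fst.2

theorem memℓp_bCoef (f : Hh) : Memℓp (bCoef f) 2 := f.snd.2.star_mem

theorem norm_sq_eq_tsum_coef (f : Hh) :
    ‖f‖ ^ 2 = ∑' n, ‖aCoef f n‖ ^ 2 + ∑' n, ‖bCoef f n‖ ^ 2 := by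
  simp [WithLp.prod_norm_sq_eq_of_L2, lp.norm_sq_eq_tsum, aCoef_eq_fst, bCoef_eq_star_snd]

def Hh.ofCoeffs (a b : ℕ → ℂ) (ha : Memℓp a 2) (hb : Memℓp b 2) : Hh :=
  WithLp.toLp 2 (⟨a, ha⟩, ⟨(star b : ℕ → ℂ), hb.star_mem⟩)

theorem aCoef_ofCoeffs {a b : ℕ → ℂ} (ha : Memℓp a 2) (hb : Memℓp b 2) :
    aCoef (Hh.ofCoeffs a b ha hb) = a := rfl

theorem bCoef_ofCoeffs {a b : ℕ → ℂ} (ha : Memℓp a 2) (hb : Memℓp b 2) :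
    bCoef (Hh.ofCoeffs a b ha hb) = b :=
  funext fun n => conj_conj (b n)

section CompositionWithMonomial

variable {α : ℂ} {k : ℕ}

theorem represents_monomial_iff (hk : k ≠ 0) (hα : ‖α‖ ≤ 1) {f F : Hh} :
    Represents (fun z => α * z ^ k) f F ↔
      aCoef F = compMonomialCoeff k α (aCoef f) ∧ bCoef F = compMonomialCoeff k α (bCoef f) := by
  rw [← forall_tsum_mul_pow_eq_comp_monomial_iff hk hα (memℓp_aCoef F) (memℓp_aCoef f),
    ← forall_tsum_mul_pow_eq_comp_monomial_iff hk hα (memℓp_bCoef F) (memℓp_bCoef f)]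
  exact forall₂_and

theorem exists_represents_monomial (hk : k ≠ 0) (hα : ‖α‖ ≤ 1) (f : Hh) :
    ∃ F, Represents (fun z => α * z ^ k) f F :=
  ⟨Hh.ofCoeffs _ _ (memℓp_compMonomialCoeff hk hα (memℓp_aCoef f))
      (memℓp_compMonomialCoeff hk hα (memℓp_bCoef f)),
    (represents_monomial_iff hk hα).2 ⟨aCoef_ofCoeffs _ _, bCoef_ofCoeffs _ _⟩⟩

theorem norm_sq_of_represents_monomial (hk : k ≠ 0) (hα : ‖α‖ ≤ 1) {f F : Hh}
    (hF : Represents (fun z => α * z ^ k) f F) :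
    ‖F‖ ^ 2 = ∑' n, ‖aCoef f n‖ ^ 2 * (‖α‖ ^ 2) ^ n + ∑' n, ‖bCoef f n‖ ^ 2 * (‖α‖ ^ 2) ^ n := by
  obtain ⟨ha, hb⟩ := (represents_monomial_iff hk hα).1 hF
  rw [norm_sq_eq_tsum_coef, ha, hb, tsum_norm_sq_compMonomialCoeff hk,
    tsum_norm_sq_compMonomialCoeff hk]

end CompositionWithMonomial

/-- For `|α| ≤ 1` and `k ≥ 1`, the composition operator `C_φ` with
`φ(z) = α z^k` is an isometry on `H²ₕ(𝔻)` if and only if `|α| = 1`. -/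
theorem stmt_6 (α : ℂ) (hα : ‖α‖ ≤ 1) (k : ℕ) (hk : 1 ≤ k) :
    (∀ f : Hh, ∃ F : Hh, Represents (fun z => α * z ^ k) f F ∧ ‖F‖ = ‖f‖) ↔ ‖α‖ = 1 := by
  have hk0 : k ≠ 0 := Nat.one_le_iff_ne_zero.1 hk
  constructor
  · intro H
    have h1 : Memℓp (Pi.single 1 1 : ℕ → ℂ) 2 := (lp.single (E := fun _ : ℕ => ℂ) 2 1 1).2
    obtain ⟨F, hF, hFf⟩ := H (Hh.ofCoeffs _ 0 h1 zero_memℓp)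
    have hsq := congrArg (· ^ 2) hFf
    rw [norm_sq_of_represents_monomial hk0 hα hF, norm_sq_eq_tsum_coef, aCoef_ofCoeffs,
      bCoef_ofCoeffs] at hsq
    rw [← pow_eq_one_iff_of_nonneg (norm_nonneg α) two_ne_zero]
    simpa [Pi.single_apply, apply_ite] using hsq
  · intro hα1 f
    obtain ⟨F, hF⟩ := exists_represents_monomial hk0 hα f
    refine ⟨F, hF, (sq_eq_sq₀ (norm_nonneg _) (norm_nonneg _)).1 ?_⟩
    simp [norm_sq_of_represents_monomial hk0 hα hF, norm_sq_eq_tsum_coef f, hα1]
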